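/- arXiv:2602.13141 — 5 statements merged into one kernel-verified Lean document; each statement's English description precedes it below -/
import Mathlib

section
/- Let $\mathbf{H} \in \mathbb{R}^{n\times n}$ be symmetric positive definite with eigenvalues $\mu_1, \dots, \mu_n$ (listed with multiplicity), $\mathbf{b} \in \mathbb{R}^n$, and $f(\mathbf{x}) = \frac{1}{2}\mathbf{x}^T\mathbf{H}\mathbf{x} + \mathbf{b}^T\mathbf{x}$. Let $\sigma$ be any permutation of $\{1, \dots, n\}$ and generate the gradient iteration $\mathbf{x}_{k+1} = \mathbf{x}_k - \mu_{\sigma(k+1)}^{-1}\,\mathbf{g}_k$ for $k = 0, \dots, n-1$, where $\mathbf{g}_k = \mathbf{H}\mathbf{x}_k + \mathbf{b}$. Then $\mathbf{g}_n = \mathbf{0}$, i.e., $\mathbf{x}_n$ is the unique minimizer of $f$. -/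
/-!
Along the iteration the gradient `g = H x + b` evolves by `g_{k+1} = (1 - t_k H) g_k`, so
`g_n = p(H) g_0` with `p = ∏ i, (1 - X / μ i)`. This `p` is a nonzero scalar multiple of the
characteristic polynomial of `H`, hence `p(H) = 0` by Cayley–Hamilton; the `μ i` are nonzero
because their product is `det H > 0`. Once `H x + b = 0`, the identity
`f y - f x = ½ (y - x)ᵀ H (y - x)` makes `x` the unique minimizer.
-/

open Matrix Polynomial

namespace Matrix

section Gradient

variable {n R : Type*} [Fintype n] [DecidableEq n] [CommRing R]

theorem det_eq_prod_of_charpoly_eq_prod {H : Matrix n n R} {μ : n → R}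
    (hchar : H.charpoly = ∏ i, (X - C (μ i))) : H.det = ∏ i, μ i := by
  have h := congrArg (eval 0) hchar
  simp only [eval_charpoly, eval_prod, eval_sub, eval_X, eval_C, zero_sub, Finset.prod_neg,
    Finset.card_univ, map_zero, det_neg] at h
  have hsq : ((-1 : R) ^ Fintype.card n) * (-1) ^ Fintype.card n = 1 := by
    rw [← mul_pow]; simp
  calc H.det = ((-1) ^ Fintype.card n * (-1) ^ Fintype.card n) * H.det := by rw [hsq, one_mul]
    _ = ∏ i, μ i := by rw [mul_assoc, h, ← mul_assoc, hsq, one_mul]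

theorem mulVec_sub_smul_add_eq (H : Matrix n n R) (b x : n → R) (t : R) :
    H *ᵥ (x - t • (H *ᵥ x + b)) + b = (1 - t • H) *ᵥ (H *ᵥ x + b) := by
  rw [mulVec_sub, mulVec_smul, sub_mulVec, one_mulVec, smul_mulVec]
  abel

theorem mulVec_add_eq_aeval_prod_mulVec (H : Matrix n n R) (b : n → R) {m : ℕ} (t : Fin m → R)
    (x : ℕ → n → R) (hx : ∀ k : Fin m, x (k + 1) = x k - t k • (H *ᵥ x k + b)) :
    H *ᵥ x m + b = aeval H (∏ k, (1 - C (t k) * X)) *ᵥ (H *ᵥ x 0 + b) := by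
  induction m with
  | zero => simp
  | succ m ih =>
    have hlast := hx (Fin.last m)
    simp only [Fin.val_last] at hlast
    rw [hlast, mulVec_sub_smul_add_eq, ih (fun k => t k.castSucc) (fun k => hx k.castSucc),
      Fin.prod_univ_castSucc, mul_comm, map_mul, ← mulVec_mulVec]
    simp [Algebra.algebraMap_eq_smul_one]

theorem aeval_prod_one_sub_inv_mul_X_eq_zero {K : Type*} [Field K] {H : Matrix n n K}
    {μ : n → K} (hchar : H.charpoly = ∏ i, (X - C (μ i))) (hμ : ∀ i, μ i ≠ 0) :
    aeval H (∏ i, (1 - C (μ i)⁻¹ * X)) = 0 := by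
  have hfac : ∀ i, (1 : K[X]) - C (μ i)⁻¹ * X = C (-(μ i)⁻¹) * (X - C (μ i)) := by
    intro i
    rw [mul_sub, ← C_mul, neg_mul, inv_mul_cancel₀ (hμ i), map_neg, map_neg, C_1]
    ring
  rw [Finset.prod_congr rfl fun i _ => hfac i, Finset.prod_mul_distrib, ← hchar, map_mul,
    aeval_self_charpoly, mul_zero]

end Gradient

section Quadratic

variable {n R : Type*} [Fintype n] [CommRing R]

theorem IsSymm.dotProduct_mulVec_sub_dotProduct_mulVec {H : Matrix n n R} (hH : H.IsSymm)
    (b x y : n → R) :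
    (y ⬝ᵥ (H *ᵥ y) + 2 * (b ⬝ᵥ y)) - (x ⬝ᵥ (H *ᵥ x) + 2 * (b ⬝ᵥ x)) =
      (y - x) ⬝ᵥ (H *ᵥ (y - x)) + 2 * ((y - x) ⬝ᵥ (H *ᵥ x + b)) := by
  have hswap : x ⬝ᵥ (H *ᵥ y) = y ⬝ᵥ (H *ᵥ x) := by
    rw [dotProduct_mulVec, ← mulVec_transpose, hH.eq, dotProduct_comm]
  simp only [mulVec_sub, sub_dotProduct, dotProduct_sub, dotProduct_add, dotProduct_comm b]
  linear_combination hswap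

theorem PosDef.lt_of_mulVec_add_eq_zero {H : Matrix n n ℝ} (hH : H.PosDef) {b x : n → ℝ}
    (hx : H *ᵥ x + b = 0) {y : n → ℝ} (hy : y ≠ x) :
    (1 / 2) * (x ⬝ᵥ (H *ᵥ x)) + b ⬝ᵥ x < (1 / 2) * (y ⬝ᵥ (H *ᵥ y)) + b ⬝ᵥ y := by
  have hsymm : H.IsSymm := isHermitian_iff_isSymm.mp hH.isHermitian
  have hpos : 0 < (y - x) ⬝ᵥ (H *ᵥ (y - x)) := by
    simpa using hH.dotProduct_mulVec_pos (sub_ne_zero.mpr hy)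
  have hdiff := hsymm.dotProduct_mulVec_sub_dotProduct_mulVec b x y
  rw [hx, dotProduct_zero] at hdiff
  linarith

end Quadratic

end Matrix

/-- Finite-termination principle (Section 2 of the paper): if the gradient
method's stepsizes run through the reciprocals of all eigenvalues of the
symmetric positive definite Hessian `H` (in any order given by a permutation
`σ`), then after `n` steps the gradient vanishes, i.e. `xₙ` is the unique
minimizer of `f(x) = ½xᵀHx + bᵀx`. -/
theorem stmt_5 (n : ℕ) (H : Matrix (Fin n) (Fin n) ℝ) (hH : H.PosDef)
    (μ : Fin n → ℝ)
    (hchar : H.charpoly = ∏ i : Fin n, (X - C (μ i)))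
    (b : Fin n → ℝ) (σ : Equiv.Perm (Fin n))
    (x : ℕ → Fin n → ℝ)
    (hiter : ∀ k : Fin n, x ((k : ℕ) + 1) = x (k : ℕ) - (μ (σ k))⁻¹ • (H *ᵥ x (k : ℕ) + b)) :
    H *ᵥ x n + b = 0 ∧
    ∀ y : Fin n → ℝ, y ≠ x n →
      (1 / 2) * (x n ⬝ᵥ (H *ᵥ x n)) + b ⬝ᵥ x n <
        (1 / 2) * (y ⬝ᵥ (H *ᵥ y)) + b ⬝ᵥ y := by
  have hμ : ∀ i, μ i ≠ 0 := by
    have hdet := det_eq_prod_of_charpoly_eq_prod hchar ▸ hH.det_pos.ne'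
    exact fun i => Finset.prod_ne_zero_iff.mp hdet i (Finset.mem_univ i)
  have hgrad : H *ᵥ x n + b = 0 := by
    rw [mulVec_add_eq_aeval_prod_mulVec H b _ x hiter,
      Equiv.prod_comp σ fun i => 1 - C (μ i)⁻¹ * X,
      aeval_prod_one_sub_inv_mul_X_eq_zero hchar hμ, zero_mulVec]
  exact ⟨hgrad, fun y hy => hH.lt_of_mulVec_add_eq_zero hgrad hy⟩
end

section
/- Let $\mathbf{H} \in \mathbb{R}^{n\times n}$ be symmetric positive definite, $\mathbf{b} \in \mathbb{R}^n$, and let $\mathbf{x}_1 = \mathbf{x}_0 - \alpha_0^{SD}\mathbf{g}_0$ and $\mathbf{x}_2 = \mathbf{x}_1 - \alpha_1^{SD}\mathbf{g}_1$ be two exact line search steps on $f(\mathbf{x}) = \frac{1}{2}\mathbf{x}^T\mathbf{H}\mathbf{x} + \mathbf{b}^T\mathbf{x}$, where $\mathbf{g}_k = \mathbf{H}\mathbf{x}_k + \mathbf{b} \ne \mathbf{0}$ for $k = 0, 1$ and $\alpha_k^{SD} = \mathbf{g}_k^T\mathbf{g}_k/(\mathbf{g}_k^T\mathbf{H}\mathbf{g}_k)$.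 Define $\tilde{\mathbf{g}}_2 = \mathbf{g}_2 - \frac{\mathbf{g}_2^T\mathbf{g}_0}{\|\mathbf{g}_0\|^2}\mathbf{g}_0$. Then $\mathbf{g}_0^T\mathbf{H}\tilde{\mathbf{g}}_2 = 0$. -/
open Matrix

/-- The `(1,3)` entry of the transformed Hessian `A = QᵀHQ` vanishes
(equation (2.6) of the paper): after two exact (Cauchy) gradient steps on
`f(x) = ½xᵀHx + bᵀx`, the Schmidt-orthogonalized vector
`g̃₂ = g₂ - (g₂ᵀg₀/‖g₀‖²) g₀` is `H`-orthogonal to `g₀`. -/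
theorem stmt_11 (n : ℕ) (H : Matrix (Fin n) (Fin n) ℝ) (hH : H.PosDef)
    (b x0 x1 x2 g0 g1 g2 : Fin n → ℝ)
    (hg0 : g0 = H *ᵥ x0 + b) (hg0ne : g0 ≠ 0)
    (hx1 : x1 = x0 - ((g0 ⬝ᵥ g0) / (g0 ⬝ᵥ (H *ᵥ g0))) • g0)
    (hg1 : g1 = H *ᵥ x1 + b) (hg1ne : g1 ≠ 0)
    (hx2 : x2 = x1 - ((g1 ⬝ᵥ g1) / (g1 ⬝ᵥ (H *ᵥ g1))) • g1)
    (hg2 : g2 = H *ᵥ x2 + b)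
    (g2t : Fin n → ℝ)
    (hgt : g2t = g2 - ((g2 ⬝ᵥ g0) / (g0 ⬝ᵥ g0)) • g0) :
    g0 ⬝ᵥ (H *ᵥ g2t) = 0 := by
  have hT : Hᵀ = H := by
    rw [← conjTranspose_eq_transpose_of_trivial, hH.1.eq]
  have hsym : ∀ x y : Fin n → ℝ, x ⬝ᵥ (H *ᵥ y) = y ⬝ᵥ (H *ᵥ x) := by
    intro x y
    rw [dotProduct_mulVec, ← mulVec_transpose, hT, dotProduct_comm]
  have hpos : ∀ x : Fin n → ℝ, x ≠ 0 → 0 < x ⬝ᵥ (H *ᵥ x) := fun x hx => by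
    simpa using hH.re_dotProduct_pos hx
  have h0 : (0:ℝ) < g0 ⬝ᵥ (H *ᵥ g0) := hpos g0 hg0ne
  have h1H : (0:ℝ) < g1 ⬝ᵥ (H *ᵥ g1) := hpos g1 hg1ne
  have hs0 : (0:ℝ) < g0 ⬝ᵥ g0 := by
    simpa using dotProduct_self_star_pos_iff.mpr hg0ne
  set α0 : ℝ := (g0 ⬝ᵥ g0) / (g0 ⬝ᵥ (H *ᵥ g0)) with hα0
  set α1 : ℝ := (g1 ⬝ᵥ g1) / (g1 ⬝ᵥ (H *ᵥ g1)) with hα1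
  have hα0ne : α0 ≠ 0 := div_ne_zero hs0.ne' h0.ne'
  have h1 : g1 = g0 - α0 • (H *ᵥ g0) := by
    rw [hg1, hx1, hg0]
    rw [mulVec_sub, mulVec_smul]
    abel
  have h2 : g2 = g1 - α1 • (H *ᵥ g1) := by
    rw [hg2, hx2, hg1]
    rw [mulVec_sub, mulVec_smul]
    abel
  have h10 : g1 ⬝ᵥ g0 = 0 := by
    rw [h1, sub_dotProduct, smul_dotProduct, dotProduct_comm (H *ᵥ g0) g0, hα0, smul_eq_mul,
      div_mul_cancel₀ _ h0.ne', sub_self]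
  have h21 : g2 ⬝ᵥ g1 = 0 := by
    rw [h2, sub_dotProduct, smul_dotProduct, dotProduct_comm (H *ᵥ g1) g1, hα1, smul_eq_mul,
      div_mul_cancel₀ _ h1H.ne', sub_self]
  -- α0 • H g0 = g0 - g1
  have hHg0 : α0 • (H *ᵥ g0) = g0 - g1 := by rw [h1]; abel
  -- g0 ⬝ H g2 via symmetry
  have key1 : α0 * (g0 ⬝ᵥ (H *ᵥ g2)) = g0 ⬝ᵥ g2 :=
    calc α0 * (g0 ⬝ᵥ (H *ᵥ g2)) = α0 * (g2 ⬝ᵥ (H *ᵥ g0)) := by rw [hsym]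
      _ = g2 ⬝ᵥ (α0 • (H *ᵥ g0)) := by rw [dotProduct_smul, smul_eq_mul]
      _ = g2 ⬝ᵥ (g0 - g1) := by rw [hHg0]
      _ = g0 ⬝ᵥ g2 := by rw [dotProduct_sub, h21, sub_zero, dotProduct_comm]
  have key2 : α0 * (g0 ⬝ᵥ (H *ᵥ g0)) = g0 ⬝ᵥ g0 := by
    rw [hα0, div_mul_cancel₀ _ h0.ne']
  have expand : g0 ⬝ᵥ (H *ᵥ g2t) =
      g0 ⬝ᵥ (H *ᵥ g2) - ((g2 ⬝ᵥ g0) / (g0 ⬝ᵥ g0)) * (g0 ⬝ᵥ (H *ᵥ g0)) := by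
    rw [hgt, mulVec_sub, mulVec_smul, dotProduct_sub, dotProduct_smul, smul_eq_mul]
  have : α0 * (g0 ⬝ᵥ (H *ᵥ g2t)) = 0 := by
    rw [expand, mul_sub, key1, mul_comm α0, mul_assoc, mul_comm (g0 ⬝ᵥ (H *ᵥ g0)) α0, key2,
      div_mul_cancel₀ _ hs0.ne', dotProduct_comm g2 g0, sub_self]
  exact (mul_eq_zero.mp this).resolve_left hα0ne
end

section
/- Let $\mathbf{H} \in \mathbb{R}^{n\times n}$ be symmetric positive definite, $\mathbf{b} \in \mathbb{R}^n$, and let $\mathbf{x}_1 = \mathbf{x}_0 - \alpha_0^{SD}\mathbf{g}_0$ and $\mathbf{x}_2 = \mathbf{x}_1 - \alpha_1^{SD}\mathbf{g}_1$, where $\mathbf{g}_k = \mathbf{H}\mathbf{x}_k + \mathbf{b} \ne \mathbf{0}$ for $k = 0, 1$ and $\alpha_k^{SD} = \mathbf{g}_k^T\mathbf{g}_k/(\mathbf{g}_k^T\mathbf{H}\mathbf{g}_k)$. Then $\mathbf{g}_0^T\mathbf{H}\mathbf{g}_1 = -\mathbf{g}_0^T\mathbf{g}_2 / \alpha_1^{SD}$,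 and consequently $\left(\frac{\mathbf{g}_0^T\mathbf{H}\mathbf{g}_1}{\|\mathbf{g}_0\|\,\|\mathbf{g}_1\|}\right)^2 = \beta\gamma$, where $\beta = \frac{\|\mathbf{g}_2\|^2}{(\alpha_1^{SD})^2\|\mathbf{g}_1\|^2}$ and $\gamma = \frac{(\mathbf{g}_2^T\mathbf{g}_0)^2}{\|\mathbf{g}_0\|^2\|\mathbf{g}_2\|^2}$. -/
/-!
Along an exact steepest-descent step on a quadratic the gradient changes by `g' = g - α H g`
and the new gradient is orthogonal to the old one. Hence `g₀ ⬝ g₂ = g₀ ⬝ g₁ - α₁ g₀ ⬝ H g₁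
= -α₁ g₀ ⬝ H g₁`, and squaring `-(g₀ ⬝ g₂)/α₁` and inserting `‖g₂‖²/‖g₂‖²` gives `βγ`.
-/

open Matrix

section LineSearch

variable {ι K : Type*} [Fintype ι] [Field K] (H : Matrix ι ι K)

theorem mulVec_sub_smul_add (x g b : ι → K) (α : K) :
    H *ᵥ (x - α • g) + b = (H *ᵥ x + b) - α • (H *ᵥ g) := by
  rw [mulVec_sub, mulVec_smul]
  abel

theorem dotProduct_sub_exactStep_eq_zero (g : ι → K) (hg : g ⬝ᵥ (H *ᵥ g) ≠ 0) :
    g ⬝ᵥ (g - (g ⬝ᵥ g / g ⬝ᵥ (H *ᵥ g)) • (H *ᵥ g)) = 0 := by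
  rw [dotProduct_sub, dotProduct_smul, smul_eq_mul, div_mul_cancel₀ _ hg, sub_self]

theorem dotProduct_mulVec_eq_neg_div_of_orthogonal (u g : ι → K) {α : K} (hα : α ≠ 0)
    (horth : u ⬝ᵥ g = 0) :
    u ⬝ᵥ (H *ᵥ g) = -(u ⬝ᵥ (g - α • (H *ᵥ g))) / α := by
  rw [dotProduct_sub, dotProduct_smul, horth, smul_eq_mul, zero_sub, neg_neg,
    mul_div_cancel_left₀ _ hα]

end LineSearch

-- Unconditional: if `u`, `v` or `α` vanishes, both sides are `0` since `x / 0 = 0`.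
theorem sq_neg_dotProduct_div_sqrt_mul_sqrt {ι : Type*} [Fintype ι] (u v w : ι → ℝ) (α : ℝ) :
    ((-(u ⬝ᵥ w) / α) / (√(u ⬝ᵥ u) * √(v ⬝ᵥ v))) ^ 2
      = (w ⬝ᵥ w) / (α ^ 2 * (v ⬝ᵥ v)) * ((w ⬝ᵥ u) ^ 2 / ((u ⬝ᵥ u) * (w ⬝ᵥ w))) := by
  rcases eq_or_ne w 0 with rfl | hw
  · simp
  have hww : w ⬝ᵥ w ≠ 0 := fun h ↦ hw (dotProduct_self_eq_zero.mp h)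
  have hnonneg (x : ι → ℝ) : 0 ≤ x ⬝ᵥ x := dotProduct_self_star_nonneg x
  rw [div_pow, mul_pow, Real.sq_sqrt (hnonneg u), Real.sq_sqrt (hnonneg v),
    dotProduct_comm w u, div_pow, neg_sq, div_mul_div_comm, mul_comm (w ⬝ᵥ w), ← mul_assoc, mul_div_mul_right _ _ hww]
  ring

/-- The `(1,2)` entry of the transformed Hessian (equation (2.6) of the paper):
after two exact (Cauchy) line search steps on `f(x) = ½xᵀHx + bᵀx`,
`g₀ᵀHg₁ = -g₀ᵀg₂/α₁^{SD}`, and consequently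
`(g₀ᵀHg₁/(‖g₀‖‖g₁‖))² = βγ` with `β = ‖g₂‖²/((α₁^{SD})²‖g₁‖²)` and
`γ = (g₂ᵀg₀)²/(‖g₀‖²‖g₂‖²)`. -/
theorem stmt_12 (n : ℕ) (H : Matrix (Fin n) (Fin n) ℝ) (hH : H.PosDef)
    (b x0 x1 x2 g0 g1 g2 : Fin n → ℝ)
    (hg0 : g0 = H *ᵥ x0 + b) (hg0ne : g0 ≠ 0)
    (α0 α1 : ℝ)
    (hα0 : α0 = (g0 ⬝ᵥ g0) / (g0 ⬝ᵥ (H *ᵥ g0)))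
    (hx1 : x1 = x0 - α0 • g0)
    (hg1 : g1 = H *ᵥ x1 + b) (hg1ne : g1 ≠ 0)
    (hα1 : α1 = (g1 ⬝ᵥ g1) / (g1 ⬝ᵥ (H *ᵥ g1)))
    (hx2 : x2 = x1 - α1 • g1)
    (hg2 : g2 = H *ᵥ x2 + b)
    (β γ : ℝ)
    (hβ : β = (g2 ⬝ᵥ g2) / (α1 ^ 2 * (g1 ⬝ᵥ g1)))
    (hγ : γ = (g2 ⬝ᵥ g0) ^ 2 / ((g0 ⬝ᵥ g0) * (g2 ⬝ᵥ g2))) :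
    g0 ⬝ᵥ (H *ᵥ g1) = -(g0 ⬝ᵥ g2) / α1 ∧
    ((g0 ⬝ᵥ (H *ᵥ g1)) / (Real.sqrt (g0 ⬝ᵥ g0) * Real.sqrt (g1 ⬝ᵥ g1))) ^ 2
      = β * γ := by
  have hcurv {g : Fin n → ℝ} (hg : g ≠ 0) : 0 < g ⬝ᵥ (H *ᵥ g) := by
    simpa using hH.dotProduct_mulVec_pos hg
  have hstep1 : g1 = g0 - α0 • (H *ᵥ g0) := by rw [hg1, hx1, mulVec_sub_smul_add, ← hg0]
  have hstep2 : g2 = g1 - α1 • (H *ᵥ g1) := by rw [hg2, hx2, mulVec_sub_smul_add, ← hg1]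
  have horth : g0 ⬝ᵥ g1 = 0 := by
    rw [hstep1, hα0]
    exact dotProduct_sub_exactStep_eq_zero H g0 (hcurv hg0ne).ne'
  have hα1ne : α1 ≠ 0 := by
    rw [hα1]
    exact (div_pos (dotProduct_self_star_pos_iff.mpr hg1ne) (hcurv hg1ne)).ne'
  have hentry : g0 ⬝ᵥ (H *ᵥ g1) = -(g0 ⬝ᵥ g2) / α1 := by
    rw [hstep2]
    exact dotProduct_mulVec_eq_neg_div_of_orthogonal H g0 g1 hα1ne horth
  refine ⟨hentry, ?_⟩
  rw [hentry, hβ, hγ]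
  exact sq_neg_dotProduct_div_sqrt_mul_sqrt g0 g1 g2 α1
end

section
/- Let $0 < \lambda_n \le \lambda_1$, let $a_{11}, a_{22}, a_{33} \in [\lambda_n, \lambda_1]$, and let $0 \le \beta \le \lambda_1^2 - \lambda_n^2$. Set $t_1 = a_{11}+a_{22}+a_{33}$ and $D = \frac{\beta}{3} + \frac{1}{18}\left[(a_{11}-a_{22})^2 + (a_{22}-a_{33})^2 + (a_{11}-a_{33})^2\right]$. Then $\lambda_n \le \frac{t_1}{3} + \sqrt{D} \le \frac{t_1}{3} + 2\sqrt{D} \le \lambda_1 + 2\sqrt{\frac{(\lambda_1 - \lambda_n)(3\lambda_1 + \lambda_n)}{6}}$. -/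
/-- Property (i) of Lemma 3.1: with `t₁ = a₁₁ + a₂₂ + a₃₃` and
`D = β/3 + [(a₁₁-a₂₂)² + (a₂₂-a₃₃)² + (a₁₁-a₃₃)²]/18`, one has
`λₙ ≤ t₁/3 + √D ≤ t₁/3 + 2√D ≤ λ₁ + 2√((λ₁-λₙ)(3λ₁+λₙ)/6)`. -/
theorem stmt_16 (lam1 lamn : ℝ) (hpos : 0 < lamn) (hle : lamn ≤ lam1)
    (a11 a22 a33 : ℝ)
    (h11 : a11 ∈ Set.Icc lamn lam1) (h22 : a22 ∈ Set.Icc lamn lam1)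
    (h33 : a33 ∈ Set.Icc lamn lam1)
    (β : ℝ) (hβ0 : 0 ≤ β) (hβ : β ≤ lam1 ^ 2 - lamn ^ 2)
    (t1 D : ℝ) (ht1 : t1 = a11 + a22 + a33)
    (hD : D = β / 3 + (1 / 18) * ((a11 - a22) ^ 2 + (a22 - a33) ^ 2 + (a11 - a33) ^ 2)) :
    lamn ≤ t1 / 3 + Real.sqrt D ∧
    t1 / 3 + Real.sqrt D ≤ t1 / 3 + 2 * Real.sqrt D ∧
    t1 / 3 + 2 * Real.sqrt D
      ≤ lam1 + 2 * Real.sqrt ((lam1 - lamn) * (3 * lam1 + lamn) / 6) := by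
  obtain ⟨h11l, h11u⟩ := h11
  obtain ⟨h22l, h22u⟩ := h22
  obtain ⟨h33l, h33u⟩ := h33
  have hD0 : 0 ≤ D := by nlinarith [sq_nonneg (a11 - a22), sq_nonneg (a22 - a33), sq_nonneg (a11 - a33)]
  have hs : 0 ≤ Real.sqrt D := Real.sqrt_nonneg D
  refine ⟨by nlinarith, by nlinarith, ?_⟩
  have hDle : D ≤ (lam1 - lamn) * (3 * lam1 + lamn) / 6 := by
    nlinarith [sq_nonneg (a11 - a22), sq_nonneg (a22 - a33), sq_nonneg (a11 - a33),
      sq_nonneg (lam1 - lamn), mul_nonneg (sub_nonneg.2 h11l) (sub_nonneg.2 h22u),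
      mul_nonneg (sub_nonneg.2 h22l) (sub_nonneg.2 h11u),
      mul_nonneg (sub_nonneg.2 h22l) (sub_nonneg.2 h33u),
      mul_nonneg (sub_nonneg.2 h33l) (sub_nonneg.2 h22u),
      mul_nonneg (sub_nonneg.2 h11l) (sub_nonneg.2 h33u),
      mul_nonneg (sub_nonneg.2 h33l) (sub_nonneg.2 h11u)]
  have := Real.sqrt_le_sqrt hDle
  nlinarith [this, hs]
end

section
/- Let $\lambda > 0$, let $c, d$ be real numbers with $c \ge \frac{2}{3}\lambda$ and $d \ge \frac{2}{3}\lambda$, let $r \in [0, 1]$, and let $\beta \ge 0$. Then $\frac{c + d + rc}{3} + \sqrt{\frac{\beta}{3} + \frac{1}{18}\left[(c-d)^2 + (d - rc)^2 + (c - rc)^2\right]} \;\ge\; \left(\frac{4}{9} + \frac{\sqrt{2}}{9} + \frac{2-\sqrt{2}}{9}r\right)\lambda \;\ge\; \frac{4+\sqrt{2}}{9}\lambda.$ -/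
/-!
Bound the square root from below by its `(c - r c)²` term alone, `√((c - r c)² / 18) = (c - r c) √2 / 6`.
What remains is affine in `c` and `d` with nonnegative coefficients, so its minimum over
`c, d ≥ 2λ/3` is attained at `c = d = 2λ/3`, where it equals `(4 + √2 + (2 - √2) r) λ / 9`.
-/

open Real

lemma mul_sqrt_two_div_six_le_sqrt {β : ℝ} (hβ : 0 ≤ β) (u v w : ℝ) :
    w * √2 / 6 ≤ √(β / 3 + 1 / 18 * (u ^ 2 + v ^ 2 + w ^ 2)) := by
  have hsq : (w * √2 / 6) ^ 2 = w ^ 2 / 18 := by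
    rw [div_pow, mul_pow, sq_sqrt zero_le_two]
    ring
  refine (le_abs_self _).trans (abs_le_sqrt ?_)
  rw [hsq]
  nlinarith [sq_nonneg u, sq_nonneg v]

lemma lower_bound_le_of_two_thirds_le {lam c d r : ℝ}
    (hc : 2 / 3 * lam ≤ c) (hd : 2 / 3 * lam ≤ d) (hr0 : 0 ≤ r) (hr1 : r ≤ 1) :
    (4 / 9 + √2 / 9 + (2 - √2) / 9 * r) * lam ≤ (c + d + r * c) / 3 + (c - r * c) * √2 / 6 := by
  have hc' : 0 ≤ c - 2 / 3 * lam := sub_nonneg.2 hc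
  nlinarith [mul_nonneg hr0 hc', mul_nonneg (mul_nonneg (sub_nonneg.2 hr1) hc') (sqrt_nonneg 2)]

/-- Key inequality in Case (2) of the proof of Property (ii) of Lemma 3.1:
for `c, d ≥ (2/3)λ`, `r ∈ [0,1]`, `β ≥ 0`,
`(c+d+rc)/3 + √(β/3 + [(c-d)² + (d-rc)² + (c-rc)²]/18)
  ≥ (4/9 + √2/9 + (2-√2)/9 · r)λ ≥ (4+√2)/9 · λ`. -/
theorem stmt_17 (lam : ℝ) (hlam : 0 < lam) (c d : ℝ)
    (hc : 2 / 3 * lam ≤ c) (hd : 2 / 3 * lam ≤ d)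
    (r : ℝ) (hr0 : 0 ≤ r) (hr1 : r ≤ 1) (β : ℝ) (hβ : 0 ≤ β) :
    (4 / 9 + Real.sqrt 2 / 9 + (2 - Real.sqrt 2) / 9 * r) * lam ≤
      (c + d + r * c) / 3 +
        Real.sqrt (β / 3 + (1 / 18) * ((c - d) ^ 2 + (d - r * c) ^ 2 + (c - r * c) ^ 2)) ∧
    (4 + Real.sqrt 2) / 9 * lam ≤
      (4 / 9 + Real.sqrt 2 / 9 + (2 - Real.sqrt 2) / 9 * r) * lam := by
  refine ⟨(lower_bound_le_of_two_thirds_le hc hd hr0 hr1).trans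
    (add_le_add_right (mul_sqrt_two_div_six_le_sqrt hβ _ _ _) _), ?_⟩
  have hsqrt_two : √2 ≤ 2 := (sqrt_le_left zero_le_two).2 (by norm_num)
  nlinarith [mul_nonneg (mul_nonneg (sub_nonneg.2 hsqrt_two) hr0) hlam.le]
end
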